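/- Let p : X̃ → X be a quandle covering, and suppose X̃ has finite type and X̃ is connected. Then type(X) = type(X̃). -/
import Mathlib


/-- A quandle: a set with a binary operation `op` such that `op x x = x`,
right translations are bijective, and `op` is right self-distributive. -/
structure Qdl (X : Type*) where
  op : X → X → X
  idem : ∀ x, op x x = x
  bij : ∀ y, Function.Bijective (fun x => op x y)
  distrib : ∀ x y z, op (op x y) z = op (op x z) (op y z)

namespace Qdl

variable {X : Type*}

/-- The right translation `S_y` as a permutation of `X`. -/
noncomputable def S (q : Qdl X) (y : X) : Equiv.Perm X := Equiv.ofBijective _ (q.bij y)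

/-- `x *^n y` : the `n`-fold application of the right translation by `y` to `x`. -/
noncomputable def npow (q : Qdl X) (x : X) (n : ℕ) (y : X) : X := ((q.S y) ^ n) x

/-- `x *^m y` for an integer `m` (negative powers use the inverse translation). -/
noncomputable def zpow (q : Qdl X) (x : X) (m : ℤ) (y : X) : X := ((q.S y) ^ m) x

end Qdl

def typeSet {X : Type*} (q : Qdl X) : Set ℕ := {n | 0 < n ∧ ∀ x y, q.npow x n y = x}

/-- The type of a quandle (least positive `n` with `x *^n y = x` for all `x, y`;
`sInf ∅ = 0` plays the role of `∞`). -/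
noncomputable def qtype {X : Type*} (q : Qdl X) : ℕ := sInf (typeSet q)

/-- A quandle is connected if the group generated by the right translations
(i.e. the image of the action of the associated group) acts transitively. -/
def Conn {X : Type*} (q : Qdl X) : Prop :=
  ∀ x y : X, ∃ g ∈ Subgroup.closure (Set.range q.S), g x = y

lemma Qdl.S_apply {X : Type*} (q : Qdl X) (x y : X) : q.S y x = q.op x y := rfl

/-- Conjugation formula: `S z * S y = S (S z y) * S z`. -/
lemma Qdl.S_conj {X : Type*} (q : Qdl X) (y z : X) :
    q.S z * q.S y = q.S (q.S z y) * q.S z := by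
  ext x
  simp only [Equiv.Perm.mul_apply, Qdl.S_apply]
  exact q.distrib x y z

lemma Qdl.S_pow_conj {X : Type*} (q : Qdl X) (y z : X) (n : ℕ) :
    (q.S z) ^ n * q.S y = q.S (((q.S z) ^ n) y) * (q.S z) ^ n := by
  induction n with
  | zero => simp
  | succ n ih =>
    rw [pow_succ', mul_assoc, ih, ← mul_assoc, Qdl.S_conj, mul_assoc, ← pow_succ']
    congr 1
    rw [pow_succ', Equiv.Perm.mul_apply]

lemma Qdl.S_pow_self {X : Type*} (q : Qdl X) (b : X) (n : ℕ) :
    ((q.S b) ^ n) b = b := by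
  induction n with
  | zero => rfl
  | succ n ih => rw [pow_succ, Equiv.Perm.mul_apply, Qdl.S_apply, q.idem, ih]

/-- A homomorphism commutes with powers of the right translations. -/
lemma hom_pow {Xt X : Type*} (qt : Qdl Xt) (q : Qdl X) (p : Xt → X)
    (hhom : ∀ a b : Xt, p (qt.op a b) = q.op (p a) (p b)) (n : ℕ) (a b : Xt) :
    p (((qt.S b) ^ n) a) = ((q.S (p b)) ^ n) (p a) := by
  induction n with
  | zero => rfl
  | succ n ih =>
    have e1 : ((qt.S b) ^ (n+1)) a = qt.op (((qt.S b) ^ n) a) b := by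
      rw [pow_succ', Equiv.Perm.mul_apply]; rfl
    have e2 : ((q.S (p b)) ^ (n+1)) (p a) = q.op (((q.S (p b)) ^ n) (p a)) (p b) := by
      rw [pow_succ', Equiv.Perm.mul_apply]; rfl
    rw [e1, e2, hhom, ih]

/-- if `p : X̃ → X` is a quandle covering, `X̃` has finite type and `X̃`
is connected, then `type(X) = type(X̃)`. -/
theorem stmt13 {Xt X : Type*} (qt : Qdl Xt) (q : Qdl X) (p : Xt → X)
    (hsurj : Function.Surjective p)
    (hhom : ∀ a b : Xt, p (qt.op a b) = q.op (p a) (p b))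
    (hcov : ∀ a b : Xt, p a = p b → ∀ α : Xt, qt.op α a = qt.op α b)
    (hfin : (typeSet qt).Nonempty)
    (hconn : Conn qt) :
    qtype q = qtype qt := by
  have hset : typeSet q = typeSet qt := by
    ext n
    constructor
    · rintro ⟨hn, h⟩
      refine ⟨hn, fun a b => ?_⟩
      -- let g = (S b)^n; show g fixes everything
      set g : Equiv.Perm Xt := (qt.S b) ^ n with hg
      -- p ∘ g = p
      have hpg : ∀ x : Xt, p (g x) = p x := fun x => by
        rw [hg, hom_pow qt q p hhom]
        exact h (p x) (p b)
      -- hence S (g x) = S x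
      have hSg : ∀ x : Xt, qt.S (g x) = qt.S x := fun x => by
        ext α
        exact hcov (g x) x (hpg x) α
      -- g commutes with every generator S y
      have hcomm : ∀ y : Xt, Commute g (qt.S y) := fun y => by
        have := qt.S_pow_conj y b n
        rw [← hg, hSg y] at this
        exact this
      -- g commutes with everything in the closure
      have hcomm' : ∀ h' ∈ Subgroup.closure (Set.range qt.S), Commute g h' := by
        intro h' hh'
        induction hh' using Subgroup.closure_induction with
        | mem z hz => obtain ⟨y, rfl⟩ := hz; exact hcomm y
        | one => exact Commute.one_right g
        | mul u v _ _ hu hv => exact hu.mul_right hv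
        | inv u _ hu => exact hu.inv_right
      -- g fixes b
      have hgb : g b = b := qt.S_pow_self b n
      -- by connectedness g fixes a
      obtain ⟨h', hh', hha⟩ := hconn b a
      have : g a = a := by
        rw [← hha, ← Equiv.Perm.mul_apply, (hcomm' h' hh').eq, Equiv.Perm.mul_apply, hgb]
      exact this
    · rintro ⟨hn, h⟩
      refine ⟨hn, fun x y => ?_⟩
      obtain ⟨a, rfl⟩ := hsurj x
      obtain ⟨b, rfl⟩ := hsurj y
      calc q.npow (p a) n (p b) = p (((qt.S b) ^ n) a) :=
            (hom_pow qt q p hhom n a b).symm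
        _ = p a := by
            rw [show ((qt.S b) ^ n) a = qt.npow a n b from rfl, h a b]
  rw [qtype, qtype, hset]
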